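/- Integrated multiple-addition formula: in the setting above, ⟨f^{(M)}, g^{(M)}⟩(x) = ⟨f,g⟩(x) − Σ_{j,k=1}^M ⟨φ_j,f⟩(x) (F^{-1}(x))_{jk} ⟨φ_k,g⟩(x) for all x in (x1,x2). -/

import Mathlib

/-!
Write `a = ⟨φ, f⟩`, `b = ⟨φ, g⟩` for the vectors of brackets and `N = F⁻¹`, so that
`f^{(M)} = f - φ ⬝ N a`. Since `F' = φ φᵀ`, differentiating `F N = 1` gives `N' = -N φ φᵀ N`;
with `a' = f φ`, `b' = g φ` and `N` symmetric, the product rule yields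
`(a ⬝ N b)' = f g - f^{(M)} g^{(M)}`. Integrating from `x1`, where `a` and `b` vanish, gives the
identity. `F` is the identity plus a Gram matrix, hence positive definite, so `N` exists and is
continuous on all of `[x1, x]`.
-/

open Set MeasureTheory intervalIntegral Matrix

/-- The Abraham–Moses matrix `F(x)` with entries `δ_{jk} + ∫_{x1}^x φ_j φ_k`. -/
noncomputable def amF (x1 : ℝ) {M : ℕ} (φ : Fin M → ℝ → ℝ) (x : ℝ) :
    Matrix (Fin M) (Fin M) ℝ :=
  Matrix.of fun j k => (if j = k then (1 : ℝ) else 0) + ∫ t in x1..x, φ j t * φ k t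

/-- The `M`-fold Abraham–Moses transform `f^{(M)} = f − Σ_{j,k} φ_j (F⁻¹)_{jk} ⟨φ_k,f⟩`. -/
noncomputable def amTransform (x1 : ℝ) {M : ℕ} (φ : Fin M → ℝ → ℝ)
    (f : ℝ → ℝ) (x : ℝ) : ℝ :=
  f x - ∑ j : Fin M, ∑ k : Fin M,
    φ j x * (amF x1 φ x)⁻¹ j k * ∫ t in x1..x, φ k t * f t

section MatrixInverse

variable {𝕜 : Type*} [NontriviallyNormedField 𝕜] {n : Type*} [Fintype n] [DecidableEq n]

theorem Matrix.continuousOn_inv_apply {X : Type*} [TopologicalSpace X] {A : X → Matrix n n 𝕜}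
    {S : Set X} (hA : ∀ i j, ContinuousOn (fun s => A s i j) S)
    (hdet : ∀ s ∈ S, (A s).det ≠ 0) (i j : n) :
    ContinuousOn (fun s => (A s)⁻¹ i j) S := by
  have hA' : ContinuousOn A S :=
    continuousOn_pi.2 fun i => continuousOn_pi.2 fun j => hA i j
  intro s hs
  have hinv : ContinuousAt Inv.inv (A s) := continuousAt_matrix_inv _ <| by
    simpa only [Ring.inverse_eq_inv'] using continuousAt_inv₀ (hdet s hs)
  exact ((continuous_apply j).comp (continuous_apply i)).continuousAt.comp_continuousWithinAt
    (hinv.comp_continuousWithinAt (hA' s hs))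

variable {A : 𝕜 → Matrix n n 𝕜} {t : 𝕜}

theorem Matrix.differentiableAt_det_of_apply
    (hA : ∀ i j, DifferentiableAt 𝕜 (fun s => A s i j) t) :
    DifferentiableAt 𝕜 (fun s => (A s).det) t := by
  simp only [det_apply']
  fun_prop

theorem Matrix.differentiableAt_inv_apply (hA : ∀ i j, DifferentiableAt 𝕜 (fun s => A s i j) t)
    (hdet : (A t).det ≠ 0) (i j : n) :
    DifferentiableAt 𝕜 (fun s => (A s)⁻¹ i j) t := by
  simp only [inv_def, Ring.inverse_eq_inv', smul_apply, smul_eq_mul, adjugate_apply]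
  refine ((differentiableAt_det_of_apply hA).inv hdet).mul
    (differentiableAt_det_of_apply fun k l => ?_)
  by_cases hk : k = j
  · simp only [hk, updateRow_self]
    exact differentiableAt_const _
  · simpa only [updateRow_ne hk] using hA k l

theorem Matrix.hasDerivAt_inv_apply {A' : Matrix n n 𝕜}
    (hA : ∀ i j, HasDerivAt (fun s => A s i j) (A' i j) t) (hdet : (A t).det ≠ 0) (i j : n) :
    HasDerivAt (fun s => (A s)⁻¹ i j) ((-((A t)⁻¹ * A' * (A t)⁻¹)) i j) t := by
  have hdiff := differentiableAt_inv_apply (fun i j => (hA i j).differentiableAt) hdet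
  set D : Matrix n n 𝕜 := of fun i j => deriv (fun s => (A s)⁻¹ i j) t
  have hD : ∀ i j, HasDerivAt (fun s => (A s)⁻¹ i j) (D i j) t := fun i j =>
    (hdiff i j).hasDerivAt
  have hdet_near : ∀ᶠ s in nhds t, (A s).det ≠ 0 :=
    (differentiableAt_det_of_apply fun i j => (hA i j).differentiableAt).continuousAt.eventually_ne
      hdet
  have hderiv_mul_inv : A' * (A t)⁻¹ + A t * D = 0 := by
    ext i j
    have hmul : HasDerivAt (fun s => (A s * (A s)⁻¹) i j) ((A' * (A t)⁻¹ + A t * D) i j) t := by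
      simp only [mul_apply, add_apply, ← Finset.sum_add_distrib]
      exact HasDerivAt.fun_sum fun k _ => (hA i k).mul (hD k j)
    have hconst : HasDerivAt (fun s => (A s * (A s)⁻¹) i j) 0 t :=
      (hasDerivAt_const t ((1 : Matrix n n 𝕜) i j)).congr_of_eventuallyEq <| by
        filter_upwards [hdet_near] with s hs
        rw [mul_nonsing_inv _ (isUnit_iff_ne_zero.2 hs)]
    exact hmul.unique hconst
  have hD_eq : D = -((A t)⁻¹ * A' * (A t)⁻¹) :=
    calc D = (A t)⁻¹ * (A t * D) := by
          rw [← Matrix.mul_assoc, nonsing_inv_mul _ (isUnit_iff_ne_zero.2 hdet), Matrix.one_mul]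
      _ = -((A t)⁻¹ * A' * (A t)⁻¹) := by
          rw [eq_neg_of_add_eq_zero_right hderiv_mul_inv, Matrix.mul_neg, Matrix.mul_assoc]
  rw [← hD_eq]
  exact hD i j

end MatrixInverse

section DotProduct

variable {n R : Type*} [Fintype n] [CommRing R]

theorem Matrix.sum_sum_mul_mul_eq_dotProduct_mulVec (v w : n → R) (N : Matrix n n R) :
    ∑ j, ∑ k, v j * N j k * w k = v ⬝ᵥ N *ᵥ w := by
  simp only [dotProduct, mulVec, Finset.mul_sum, mul_assoc]

theorem Matrix.IsSymm.dotProduct_mulVec_comm {N : Matrix n n R} (hN : N.IsSymm) (v w : n → R) :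
    v ⬝ᵥ N *ᵥ w = w ⬝ᵥ N *ᵥ v := by
  rw [dotProduct_mulVec, dotProduct_comm, ← mulVec_transpose, hN.eq]

theorem Matrix.dotProduct_mul_vecMulVec_mul_mulVec (N N' : Matrix n n R) (a b p q : n → R) :
    a ⬝ᵥ (N * vecMulVec p q * N') *ᵥ b = (a ⬝ᵥ N *ᵥ p) * (q ⬝ᵥ N' *ᵥ b) := by
  rw [← mulVec_mulVec, ← mulVec_mulVec, vecMulVec_mulVec, mulVec_smul, dotProduct_smul]
  simp

/-- The right side is `(a ⬝ᵥ N *ᵥ b)'` when `a' = x • p`, `b' = y • p`, `N' = -N (p pᵀ) N`. -/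
theorem Matrix.IsSymm.mul_sub_sub_mul_sub_dotProduct_mulVec {N : Matrix n n R} (hN : N.IsSymm)
    (p a b : n → R) (x y : R) :
    x * y - (x - p ⬝ᵥ N *ᵥ a) * (y - p ⬝ᵥ N *ᵥ b) =
      (x • p) ⬝ᵥ N *ᵥ b + a ⬝ᵥ (-(N * vecMulVec p p * N)) *ᵥ b + a ⬝ᵥ N *ᵥ (y • p) := by
  rw [neg_mulVec, dotProduct_neg, dotProduct_mul_vecMulVec_mul_mulVec, mulVec_smul,
    dotProduct_smul, smul_dotProduct, hN.dotProduct_mulVec_comm a p, smul_eq_mul, smul_eq_mul]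
  ring

end DotProduct

section DotProductDerivative

variable {𝕜 : Type*} [NontriviallyNormedField 𝕜] {n : Type*} [Fintype n]

theorem HasDerivAt.dotProduct_mulVec {a b : 𝕜 → n → 𝕜} {N : 𝕜 → Matrix n n 𝕜}
    {a' b' : n → 𝕜} {N' : Matrix n n 𝕜} {t : 𝕜}
    (ha : ∀ j, HasDerivAt (fun s => a s j) (a' j) t)
    (hN : ∀ j k, HasDerivAt (fun s => N s j k) (N' j k) t)
    (hb : ∀ k, HasDerivAt (fun s => b s k) (b' k) t) :
    HasDerivAt (fun s => a s ⬝ᵥ N s *ᵥ b s)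
      (a' ⬝ᵥ N t *ᵥ b t + a t ⬝ᵥ N' *ᵥ b t + a t ⬝ᵥ N t *ᵥ b') t := by
  simp only [← sum_sum_mul_mul_eq_dotProduct_mulVec, ← Finset.sum_add_distrib]
  refine HasDerivAt.fun_sum fun j _ => HasDerivAt.fun_sum fun k _ => ?_
  exact (((ha j).fun_mul (hN j k)).fun_mul (hb k)).congr_deriv (by ring)

end DotProductDerivative

section Integration

variable {E : Type*} [NormedAddCommGroup E] {h : ℝ → E} {a b : ℝ}

theorem MeasureTheory.IntegrableOn.intervalIntegrable_of_mem_Icc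
    (hh : IntegrableOn h (Ioo a b)) {t : ℝ} (ht : t ∈ Icc a b) :
    IntervalIntegrable h volume a t := by
  rw [intervalIntegrable_iff_integrableOn_Ioo_of_le ht.1]
  exact hh.mono_set (Ioo_subset_Ioo_right ht.2)

theorem MeasureTheory.IntegrableOn.continuousOn_primitive_Icc [NormedSpace ℝ E] (hab : a ≤ b)
    (hh : IntegrableOn h (Ioo a b)) :
    ContinuousOn (fun u => ∫ s in a..u, h s) (Icc a b) := by
  have := continuousOn_primitive_interval (a := a) (b := b) (μ := volume) (f := h)
    (by rwa [uIcc_of_le hab, integrableOn_Icc_iff_integrableOn_Ioo])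
  rwa [uIcc_of_le hab] at this

theorem MeasureTheory.IntegrableOn.hasDerivAt_primitive [NormedSpace ℝ E] [CompleteSpace E]
    (hh : IntegrableOn h (Ioo a b)) (hc : ContinuousOn h (Ioo a b)) {t : ℝ} (ht : t ∈ Ioo a b) :
    HasDerivAt (fun u => ∫ s in a..u, h s) (h t) t :=
  integral_hasDerivAt_right (hh.intervalIntegrable_of_mem_Icc (Ioo_subset_Icc_self ht))
    (hc.stronglyMeasurableAtFilter isOpen_Ioo t ht) (hc.continuousAt (isOpen_Ioo.mem_nhds ht))

theorem intervalIntegrable_sum_mul {ι : Type*} [Fintype ι] {u c : ι → ℝ → ℝ}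
    (hu : ∀ i, IntervalIntegrable (u i) volume a b) (hc : ∀ i, ContinuousOn (c i) (uIcc a b)) :
    IntervalIntegrable (fun t => ∑ i, u i t * c i t) volume a b := by
  simpa only [Finset.sum_fn] using
    IntervalIntegrable.sum Finset.univ fun i _ => (hu i).mul_continuousOn (hc i)

theorem intervalIntegrable_sub_dotProduct_mul_sub_dotProduct {n : Type*} [Fintype n]
    {f g : ℝ → ℝ} {p c d : ℝ → n → ℝ}
    (hfg : IntervalIntegrable (fun t => f t * g t) volume a b)
    (hpf : ∀ j, IntervalIntegrable (fun t => p t j * f t) volume a b)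
    (hpg : ∀ j, IntervalIntegrable (fun t => p t j * g t) volume a b)
    (hpp : ∀ j k, IntervalIntegrable (fun t => p t j * p t k) volume a b)
    (hc : ∀ j, ContinuousOn (fun t => c t j) (uIcc a b))
    (hd : ∀ j, ContinuousOn (fun t => d t j) (uIcc a b)) :
    IntervalIntegrable (fun t => (f t - p t ⬝ᵥ c t) * (g t - p t ⬝ᵥ d t)) volume a b := by
  have hexpand : ∀ t, (f t - p t ⬝ᵥ c t) * (g t - p t ⬝ᵥ d t) =
      f t * g t - ∑ k, p t k * f t * d t k - ∑ j, p t j * g t * c t j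
        + ∑ jk : n × n, p t jk.1 * p t jk.2 * (c t jk.1 * d t jk.2) := by
    intro t
    have hfd : f t * (p t ⬝ᵥ d t) = ∑ k, p t k * f t * d t k := by
      rw [dotProduct, Finset.mul_sum]
      exact Finset.sum_congr rfl fun k _ => by ring
    have hgc : g t * (p t ⬝ᵥ c t) = ∑ j, p t j * g t * c t j := by
      rw [dotProduct, Finset.mul_sum]
      exact Finset.sum_congr rfl fun j _ => by ring
    have hcd : (p t ⬝ᵥ c t) * (p t ⬝ᵥ d t) =
        ∑ jk : n × n, p t jk.1 * p t jk.2 * (c t jk.1 * d t jk.2) := by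
      rw [Fintype.sum_prod_type, dotProduct, dotProduct, Finset.sum_mul_sum]
      exact Finset.sum_congr rfl fun j _ => Finset.sum_congr rfl fun k _ => by ring
    rw [← hfd, ← hgc, ← hcd]
    ring
  simp only [hexpand]
  refine ((hfg.sub ?_).sub ?_).add ?_
  · exact intervalIntegrable_sum_mul hpf hd
  · exact intervalIntegrable_sum_mul hpg hc
  · exact intervalIntegrable_sum_mul (fun jk => hpp jk.1 jk.2)
      fun jk => (hc jk.1).mul (hd jk.2)

end Integration

theorem Matrix.posSemidef_integral_gram {n : Type*} [Fintype n] {φ : n → ℝ → ℝ} {a b : ℝ}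
    (hab : a ≤ b) (hint : ∀ j k, IntervalIntegrable (fun s => φ j s * φ k s) volume a b) :
    (of fun j k => ∫ s in a..b, φ j s * φ k s).PosSemidef := by
  refine .of_dotProduct_mulVec_nonneg (IsHermitian.ext fun j k => ?_) fun v => ?_
  · simp only [of_apply, star_trivial, mul_comm]
  have hterm : ∀ j k, IntervalIntegrable (fun s => v j * φ j s * (v k * φ k s)) volume a b :=
    fun j k => by simpa only [mul_mul_mul_comm] using (hint j k).const_mul (v j * v k)
  have hquad : ∫ s in a..b, (∑ j, v j * φ j s) ^ 2 =
      star v ⬝ᵥ (of fun j k => ∫ s in a..b, φ j s * φ k s) *ᵥ v := by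
    simp only [sq, Finset.sum_mul_sum]
    rw [intervalIntegral.integral_finsetSum fun j _ => by
      simpa only [Finset.sum_fn] using IntervalIntegrable.sum _ fun k _ => hterm j k]
    refine Finset.sum_congr rfl fun j _ => ?_
    rw [intervalIntegral.integral_finsetSum fun k _ => hterm j k, mulVec, dotProduct,
      Finset.mul_sum]
    refine Finset.sum_congr rfl fun k _ => ?_
    simp only [of_apply, star_trivial, ← intervalIntegral.integral_const_mul,
      ← intervalIntegral.integral_mul_const]
    exact integral_congr fun s _ => by ring
  rw [← hquad]
  exact integral_nonneg hab fun s _ => sq_nonneg _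

noncomputable def amBracket (x1 : ℝ) {M : ℕ} (φ : Fin M → ℝ → ℝ) (f : ℝ → ℝ) (x : ℝ) :
    Fin M → ℝ :=
  fun j => ∫ t in x1..x, φ j t * f t

section AbrahamMoses

variable {x1 x t : ℝ} {M : ℕ} {φ : Fin M → ℝ → ℝ} {f g : ℝ → ℝ}

theorem amTransform_eq_sub_dotProduct (x1 : ℝ) (φ : Fin M → ℝ → ℝ) (f : ℝ → ℝ) (t : ℝ) :
    amTransform x1 φ f t = f t - (φ · t) ⬝ᵥ (amF x1 φ t)⁻¹ *ᵥ amBracket x1 φ f t := by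
  rw [amTransform, sum_sum_mul_mul_eq_dotProduct_mulVec]
  rfl

theorem amBracket_self (x1 : ℝ) (φ : Fin M → ℝ → ℝ) (f : ℝ → ℝ) : amBracket x1 φ f x1 = 0 :=
  funext fun _ => integral_same

theorem amF_eq_one_add (x1 : ℝ) (φ : Fin M → ℝ → ℝ) (t : ℝ) :
    amF x1 φ t = 1 + of fun j k => ∫ s in x1..t, φ j s * φ k s := by
  ext j k
  simp [amF, one_apply]

theorem amF_isSymm (x1 : ℝ) (φ : Fin M → ℝ → ℝ) (t : ℝ) : (amF x1 φ t).IsSymm :=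
  IsSymm.ext fun j k => by simp only [amF, of_apply, eq_comm, mul_comm]

theorem amF_posDef (hxt : x1 ≤ t)
    (hint : ∀ j k, IntervalIntegrable (fun s => φ j s * φ k s) volume x1 t) :
    (amF x1 φ t).PosDef := by
  rw [amF_eq_one_add]
  exact PosDef.one.add_posSemidef (posSemidef_integral_gram hxt hint)

theorem amF_det_ne_zero (hintφ : ∀ j k, IntegrableOn (fun y => φ j y * φ k y) (Ioo x1 x))
    (ht : t ∈ Icc x1 x) : (amF x1 φ t).det ≠ 0 :=
  (amF_posDef ht.1 fun j k => (hintφ j k).intervalIntegrable_of_mem_Icc ht).det_pos.ne'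

theorem continuousOn_amF_inv_mulVec_amBracket (hx : x1 ≤ x)
    (hintφ : ∀ j k, IntegrableOn (fun y => φ j y * φ k y) (Ioo x1 x))
    (hintf : ∀ j, IntegrableOn (fun y => φ j y * f y) (Ioo x1 x)) (j : Fin M) :
    ContinuousOn (fun t => ((amF x1 φ t)⁻¹ *ᵥ amBracket x1 φ f t) j) (Icc x1 x) := by
  have hN := continuousOn_inv_apply (A := amF x1 φ)
    (fun j k => continuousOn_const.add ((hintφ j k).continuousOn_primitive_Icc hx))
    (fun t ht => amF_det_ne_zero hintφ ht)
  simp only [mulVec, dotProduct]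
  exact continuousOn_finsetSum _ fun k _ =>
    (hN j k).mul ((hintf k).continuousOn_primitive_Icc hx)

theorem hasDerivAt_amBracket_dotProduct_mulVec (hφ : ∀ j, ContinuousOn (φ j) (Ioo x1 x))
    (hf : ContinuousOn f (Ioo x1 x)) (hg : ContinuousOn g (Ioo x1 x))
    (hintφ : ∀ j k, IntegrableOn (fun y => φ j y * φ k y) (Ioo x1 x))
    (hintf : ∀ j, IntegrableOn (fun y => φ j y * f y) (Ioo x1 x))
    (hintg : ∀ j, IntegrableOn (fun y => φ j y * g y) (Ioo x1 x)) (ht : t ∈ Ioo x1 x) :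
    HasDerivAt (fun u => amBracket x1 φ f u ⬝ᵥ (amF x1 φ u)⁻¹ *ᵥ amBracket x1 φ g u)
      (f t * g t - amTransform x1 φ f t * amTransform x1 φ g t) t := by
  have hF : ∀ j k, HasDerivAt (fun u => amF x1 φ u j k) (vecMulVec (φ · t) (φ · t) j k) t :=
    fun j k => ((hintφ j k).hasDerivAt_primitive ((hφ j).mul (hφ k)) ht).const_add _
  have hN := hasDerivAt_inv_apply hF (amF_det_ne_zero hintφ (Ioo_subset_Icc_self ht))
  have hA : ∀ j, HasDerivAt (fun u => amBracket x1 φ f u j) ((f t • (φ · t)) j) t := fun j =>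
    ((hintf j).hasDerivAt_primitive ((hφ j).mul hf) ht).congr_deriv (mul_comm _ _)
  have hB : ∀ j, HasDerivAt (fun u => amBracket x1 φ g u j) ((g t • (φ · t)) j) t := fun j =>
    ((hintg j).hasDerivAt_primitive ((hφ j).mul hg) ht).congr_deriv (mul_comm _ _)
  rw [amTransform_eq_sub_dotProduct, amTransform_eq_sub_dotProduct,
    (amF_isSymm x1 φ t).inv.mul_sub_sub_mul_sub_dotProduct_mulVec]
  exact (HasDerivAt.dotProduct_mulVec hA hN hB).congr_deriv (by rw [Matrix.mul_assoc])

theorem intervalIntegrable_amTransform_mul (hx : x1 ≤ x)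
    (hintφ : ∀ j k, IntegrableOn (fun y => φ j y * φ k y) (Ioo x1 x))
    (hintf : ∀ j, IntegrableOn (fun y => φ j y * f y) (Ioo x1 x))
    (hintg : ∀ j, IntegrableOn (fun y => φ j y * g y) (Ioo x1 x))
    (hintfg : IntegrableOn (fun y => f y * g y) (Ioo x1 x)) :
    IntervalIntegrable (fun t => amTransform x1 φ f t * amTransform x1 φ g t) volume x1 x := by
  have hxx : x ∈ Icc x1 x := right_mem_Icc.2 hx
  simp only [amTransform_eq_sub_dotProduct]
  refine intervalIntegrable_sub_dotProduct_mul_sub_dotProduct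
    (hintfg.intervalIntegrable_of_mem_Icc hxx)
    (fun j => (hintf j).intervalIntegrable_of_mem_Icc hxx)
    (fun j => (hintg j).intervalIntegrable_of_mem_Icc hxx)
    (fun j k => (hintφ j k).intervalIntegrable_of_mem_Icc hxx) (fun j => ?_) (fun j => ?_) <;>
  rw [uIcc_of_le hx]
  exacts [continuousOn_amF_inv_mulVec_amBracket hx hintφ hintf j,
    continuousOn_amF_inv_mulVec_amBracket hx hintφ hintg j]

theorem integral_amTransform_mul (hx : x1 ≤ x) (hφ : ∀ j, ContinuousOn (φ j) (Ioo x1 x))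
    (hf : ContinuousOn f (Ioo x1 x)) (hg : ContinuousOn g (Ioo x1 x))
    (hintφ : ∀ j k, IntegrableOn (fun y => φ j y * φ k y) (Ioo x1 x))
    (hintf : ∀ j, IntegrableOn (fun y => φ j y * f y) (Ioo x1 x))
    (hintg : ∀ j, IntegrableOn (fun y => φ j y * g y) (Ioo x1 x))
    (hintfg : IntegrableOn (fun y => f y * g y) (Ioo x1 x)) :
    ∫ t in x1..x, amTransform x1 φ f t * amTransform x1 φ g t =
      (∫ t in x1..x, f t * g t) -
        amBracket x1 φ f x ⬝ᵥ (amF x1 φ x)⁻¹ *ᵥ amBracket x1 φ g x := by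
  have hcont : ContinuousOn (fun u => (∫ t in x1..u, f t * g t) -
      amBracket x1 φ f u ⬝ᵥ (amF x1 φ u)⁻¹ *ᵥ amBracket x1 φ g u) (Icc x1 x) :=
    (hintfg.continuousOn_primitive_Icc hx).sub <| continuousOn_finsetSum _ fun j _ =>
      ((hintf j).continuousOn_primitive_Icc hx).mul
        (continuousOn_amF_inv_mulVec_amBracket hx hintφ hintg j)
  have hderiv : ∀ t ∈ Ioo x1 x, HasDerivAt (fun u => (∫ t in x1..u, f t * g t) -
      amBracket x1 φ f u ⬝ᵥ (amF x1 φ u)⁻¹ *ᵥ amBracket x1 φ g u)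
      (amTransform x1 φ f t * amTransform x1 φ g t) t := fun t ht =>
    ((hintfg.hasDerivAt_primitive (hf.mul hg) ht).sub
      (hasDerivAt_amBracket_dotProduct_mulVec hφ hf hg hintφ hintf hintg ht)).congr_deriv
      (sub_sub_cancel _ _)
  rw [integral_eq_sub_of_hasDerivAt_of_le hx hcont hderiv
    (intervalIntegrable_amTransform_mul hx hintφ hintf hintg hintfg)]
  simp [amBracket_self]

end AbrahamMoses

theorem am_multi_integrated_identity (x1 x2 : ℝ) (M : ℕ) (φ : Fin M → ℝ → ℝ)
    (f g : ℝ → ℝ)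
    (hφc : ∀ j, ContinuousOn (φ j) (Ioo x1 x2))
    (hf : ContinuousOn f (Ioo x1 x2))
    (hg : ContinuousOn g (Ioo x1 x2))
    (hintφ : ∀ j k, ∀ x ∈ Ioo x1 x2,
      IntegrableOn (fun y => φ j y * φ k y) (Ioo x1 x))
    (hintf : ∀ j, ∀ x ∈ Ioo x1 x2,
      IntegrableOn (fun y => φ j y * f y) (Ioo x1 x))
    (hintg : ∀ j, ∀ x ∈ Ioo x1 x2,
      IntegrableOn (fun y => φ j y * g y) (Ioo x1 x))
    (hintfg : ∀ x ∈ Ioo x1 x2, IntegrableOn (fun y => f y * g y) (Ioo x1 x)) :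
    ∀ x ∈ Ioo x1 x2,
      (∫ t in x1..x, amTransform x1 φ f t * amTransform x1 φ g t) =
        (∫ t in x1..x, f t * g t) -
          ∑ j : Fin M, ∑ k : Fin M,
            (∫ t in x1..x, φ j t * f t) * (amF x1 φ x)⁻¹ j k *
              ∫ t in x1..x, φ k t * g t := by
  intro x hx
  have hsub : Ioo x1 x ⊆ Ioo x1 x2 := Ioo_subset_Ioo_right hx.2.le
  rw [sum_sum_mul_mul_eq_dotProduct_mulVec]
  exact integral_amTransform_mul hx.1.le (fun j => (hφc j).mono hsub) (hf.mono hsub)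
    (hg.mono hsub) (fun j k => hintφ j k x hx) (fun j => hintf j x hx) (fun j => hintg j x hx)
    (hintfg x hx)
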